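/- Let p ≤ -1 and γ₁ > γ₂ > 0, and let E be a real number with E > E_{γ₁}* and E > E_{γ₂}*, where E_{γᵢ}* denotes the minimum value of E_{γᵢ}. For i = 1, 2, let u_-^{(i)} < u_+^{(i)} denote the two positive roots of the equation E_{γᵢ}(u) = E. Then u_+^{(2)} > u_+^{(1)} > u_-^{(1)} > u_-^{(2)} > 0. -/

import Mathlib

open Real

/-- The function `E_γ(u) = u² + u⁻² - (2γ/p) u^{2p}` for `u > 0`. -/
noncomputable def Efun (p γ u : ℝ) : ℝ :=
  u ^ 2 + u ^ (-2 : ℝ) - 2 * γ / p * u ^ (2 * p)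

/-!
For `p < 0` and `u > 0`, `E_γ(u)` is strictly increasing in `γ`, so `E_{γ₂} < E` at both roots
of `E_{γ₁} = E`. The strictly convex `E_{γ₂}` is below the level `E` only strictly between the
two points where it attains it, which puts both roots of `E_{γ₁} = E` strictly between those of
`E_{γ₂} = E`.
-/

open Set

-- `x ^ q = (exp q) ^ (log x)`: a convex decreasing function of the strictly concave `log x`.
theorem strictConvexOn_rpow_of_neg {q : ℝ} (hq : q < 0) :
    StrictConvexOn ℝ (Ioi 0) fun x : ℝ => x ^ q := by
  have himage : log '' Ioi 0 = univ := eq_univ_of_forall fun t => ⟨exp t, exp_pos t, log_exp t⟩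
  have hconv : ConvexOn ℝ (log '' Ioi 0) fun t : ℝ => exp q ^ t :=
    himage ▸ convexOn_rpow_left (exp_pos q)
  have hanti : StrictAntiOn (fun t : ℝ => exp q ^ t) (log '' Ioi 0) :=
    (strictAnti_rpow_of_base_lt_one (exp_pos q) (exp_lt_one_iff.2 hq)).strictAntiOn _
  refine (hconv.comp_strictConcaveOn strictConcaveOn_log_Ioi hanti).congr fun x hx => ?_
  simp only [Function.comp, rpow_def_of_pos (exp_pos q), log_exp,
    rpow_def_of_pos (mem_Ioi.1 hx), mul_comm]

section StrictConvexOn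

variable {s : Set ℝ} {f : ℝ → ℝ}

theorem StrictConvexOn.lt_max_of_mem_Ioo (hf : StrictConvexOn ℝ s f) {x y z : ℝ} (hx : x ∈ s)
    (hz : z ∈ s) (hy : y ∈ Ioo x z) : f y < max (f x) (f z) :=
  hf.lt_on_openSegment hx hz (hy.1.trans hy.2).ne (by rwa [openSegment_eq_Ioo (hy.1.trans hy.2)])

theorem StrictConvexOn.mem_Ioo_of_lt (hf : StrictConvexOn ℝ s f) {a b x : ℝ} (ha : a ∈ s)
    (hb : b ∈ s) (hx : x ∈ s) (hab : a < b) (hfab : f a = f b) (hfx : f x < f a) :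
    x ∈ Ioo a b := by
  by_contra hout
  rw [mem_Ioo, not_and_or, not_lt, not_lt] at hout
  rcases hout with hxa | hbx
  · rcases hxa.eq_or_lt with rfl | hxa
    · exact hfx.false
    have hlt := hf.lt_max_of_mem_Ioo hx hb ⟨hxa, hab⟩
    rw [← hfab, max_eq_right hfx.le] at hlt
    exact hlt.false
  · rcases hbx.eq_or_lt with rfl | hbx
    · exact (hfx.trans_eq hfab).false
    have hlt := hf.lt_max_of_mem_Ioo ha hx ⟨hab, hbx⟩
    rw [← hfab, max_eq_left hfx.le] at hlt
    exact hlt.false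

end StrictConvexOn

theorem Efun_strictConvexOn {p γ : ℝ} (hp : p < 0) (hγ : 0 ≤ γ) :
    StrictConvexOn ℝ (Ioi 0) (Efun p γ) := by
  have hsq : StrictConvexOn ℝ (Ioi 0) fun u : ℝ => u ^ 2 :=
    (strictConvexOn_pow le_rfl).subset Ioi_subset_Ici_self (convex_Ioi 0)
  have hcoeff : 0 ≤ -(2 * γ / p) :=
    neg_nonneg.2 (div_nonpos_of_nonneg_of_nonpos (by positivity) hp.le)
  have hpow : ConvexOn ℝ (Ioi 0) fun u : ℝ => -(2 * γ / p) • u ^ (2 * p) :=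
    (strictConvexOn_rpow_of_neg (by linarith)).convexOn.smul hcoeff
  refine ((hsq.add (strictConvexOn_rpow_of_neg (q := -2) (by norm_num))).add_convexOn hpow).congr
    fun u _ => ?_
  simp only [Efun, smul_eq_mul, Pi.add_apply]
  ring

theorem Efun_strictMono_gamma {p u : ℝ} (hp : p < 0) (hu : 0 < u) :
    StrictMono fun γ => Efun p γ u := by
  intro γ₁ γ₂ hγ
  have hslope : 0 < -(2 / p) * u ^ (2 * p) :=
    mul_pos (neg_pos.2 (div_neg_of_pos_of_neg two_pos hp)) (rpow_pos_of_pos hu _)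
  have hdiff : Efun p γ₂ u - Efun p γ₁ u = (γ₂ - γ₁) * (-(2 / p) * u ^ (2 * p)) := by
    simp only [Efun]
    ring
  have := mul_pos (sub_pos.2 hγ) hslope
  linarith

theorem stmt_7_general (p γ₁ γ₂ E : ℝ) (hp : p ≤ -1) (hγ₁ : γ₂ < γ₁) (hγ₂ : 0 < γ₂)
    (um₁ up₁ um₂ up₂ : ℝ)
    (h₁pos : 0 < um₁) (h₁lt : um₁ < up₁)
    (h₁m : Efun p γ₁ um₁ = E) (h₁p : Efun p γ₁ up₁ = E)
    (h₂pos : 0 < um₂) (h₂lt : um₂ < up₂)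
    (h₂m : Efun p γ₂ um₂ = E) (h₂p : Efun p γ₂ up₂ = E) :
    up₁ < up₂ ∧ um₁ < up₁ ∧ um₂ < um₁ ∧ 0 < um₂ := by
  have hp₀ : p < 0 := by linarith
  have hconv := Efun_strictConvexOn hp₀ hγ₂.le
  have hup₁ : 0 < up₁ := h₁pos.trans h₁lt
  have hup₂ : 0 < up₂ := h₂pos.trans h₂lt
  have hfab : Efun p γ₂ um₂ = Efun p γ₂ up₂ := h₂m.trans h₂p.symm
  have hum₁_mem : um₁ ∈ Ioo um₂ up₂ := hconv.mem_Ioo_of_lt h₂pos hup₂ h₁pos h₂lt hfab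
    (h₂m ▸ h₁m ▸ Efun_strictMono_gamma hp₀ h₁pos hγ₁)
  have hup₁_mem : up₁ ∈ Ioo um₂ up₂ := hconv.mem_Ioo_of_lt h₂pos hup₂ hup₁ h₂lt hfab
    (h₂m ▸ h₁p ▸ Efun_strictMono_gamma hp₀ hup₁ hγ₁)
  exact ⟨hup₁_mem.2, h₁lt, hum₁_mem.1, h₂pos⟩

theorem stmt_7 (p γ₁ γ₂ E : ℝ) (hp : p ≤ -1) (hγ₁ : γ₂ < γ₁) (hγ₂ : 0 < γ₂)
    (hE₁ : sInf (Efun p γ₁ '' Set.Ioi 0) < E)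
    (hE₂ : sInf (Efun p γ₂ '' Set.Ioi 0) < E)
    (um₁ up₁ um₂ up₂ : ℝ)
    (h₁pos : 0 < um₁) (h₁lt : um₁ < up₁)
    (h₁m : Efun p γ₁ um₁ = E) (h₁p : Efun p γ₁ up₁ = E)
    (h₂pos : 0 < um₂) (h₂lt : um₂ < up₂)
    (h₂m : Efun p γ₂ um₂ = E) (h₂p : Efun p γ₂ up₂ = E) :
    up₁ < up₂ ∧ um₁ < up₁ ∧ um₂ < um₁ ∧ 0 < um₂ :=
  stmt_7_general p γ₁ γ₂ E hp hγ₁ hγ₂ um₁ up₁ um₂ up₂ h₁pos h₁lt h₁m h₁p h₂pos h₂lt h₂m h₂p
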